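/- Let Ξ be a finite set with a probability vector (p_j)_{j∈Ξ}, p_j > 0, and nonnegative numbers p_{jk} with Σ_k p_{jk} = 1 for each j. Let G be a group acting on a probability space (X,μ) by invertible measure-preserving transformations, with Koopman operators T_g on L²(X,μ). Let ι : Ξ → Ξ be an involution and γ, ω : Ξ → G maps such that: p_{ι(j)} = p_j and p_{ι(j)ι(k)} = p_k p_{kj} / p_j for all j, k ∈ Ξ; ω(ι(k)) = ω(k)^{−1} for all k ∈ Ξ; and γ(k) = ω(j)^{−1} γ(ι(j))^{−1} ω(k) whenever p_{kj} > 0. Define operators P and U on L²(Ξ × X, p × μ) by (Pφ)_i = Σ_j p_{ij} T_{γ(i)}^{−1} φ_j and (Uφ)_j = T_{ω(j)}^{−1} φ_{ι(j)}. Then U = U^{−1} = U* and P* = U P U, where * denotes the Hilbert-space adjoint on L²(Ξ × X, p × μ). -/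

import Mathlib

/-!
Composition with a measure-preserving map is an isometry of `L²`, so every Koopman operator is
unitary with `T_g* = T_{g⁻¹}`, and `g ↦ T_g` is multiplicative. Reindexing by the involution `ι`
then gives `U² = 1` and `U* = U`. Moving `P` across the inner product yields the kernel
`(P*ψ)_j = Σ_k (p_k p_{kj} / p_j) T_{γ(k)} ψ_k`, while `UPU` has the kernel
`p_{ι(j)ι(k)} T_{ω(j)⁻¹ γ(ι(j))⁻¹ ω(k)}`: reversibility of `p` and the relation between `γ` and `ω`
make them equal.
-/

open MeasureTheory Filter

noncomputable section

/-- The Markov operator `(Pφ)_i = Σ_j p_{ij} T_{γ(i)}⁻¹ φ_j` on tuples `(φ_j)_{j∈Ξ}` of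
`L²(X,μ)`-functions (identified with functions on `Ξ × X`). -/
def Pop {Ξ : Type*} [Fintype Ξ] {X : Type*} [MeasurableSpace X] {G : Type*} [Group G]
    (μ : Measure X) (p' : Ξ → Ξ → ℝ) (T : G → Lp ℝ 2 μ →L[ℝ] Lp ℝ 2 μ) (γ : Ξ → G)
    (φ : Ξ → Lp ℝ 2 μ) : Ξ → Lp ℝ 2 μ :=
  fun i => ∑ j, p' i j • T (γ i)⁻¹ (φ j)

/-- The operator `(Uφ)_j = T_{ω(j)}⁻¹ φ_{ι(j)}`. -/
def Uop {Ξ : Type*} {X : Type*} [MeasurableSpace X] {G : Type*} [Group G]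
    (μ : Measure X) (T : G → Lp ℝ 2 μ →L[ℝ] Lp ℝ 2 μ) (ι : Ξ → Ξ) (ω : Ξ → G)
    (φ : Ξ → Lp ℝ 2 μ) : Ξ → Lp ℝ 2 μ :=
  fun j => T (ω j)⁻¹ (φ (ι j))

/-- The inner product `⟨φ,ψ⟩ = Σ_j p_j ⟨φ_j, ψ_j⟩_{L²(X,μ)}` of `L²(Ξ × X, p × μ)`. -/
def wip {Ξ : Type*} [Fintype Ξ] {X : Type*} [MeasurableSpace X]
    (μ : Measure X) (p : Ξ → ℝ) (φ ψ : Ξ → Lp ℝ 2 μ) : ℝ :=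
  ∑ j, p j * (inner ℝ (φ j) (ψ j) : ℝ)

structure IsKoopman {X : Type*} [MeasurableSpace X] {G : Type*} [Group G] (μ : Measure X)
    (S : G → X → X) (T : G → Lp ℝ 2 μ →L[ℝ] Lp ℝ 2 μ) : Prop where
  measurePreserving : ∀ g, MeasurePreserving (S g) μ μ
  map_one : S 1 = id
  map_mul : ∀ g g', S (g * g') = S g ∘ S g'
  coeFn_ae_eq : ∀ g (f : Lp ℝ 2 μ), (T g f : X → ℝ) =ᵐ[μ] fun x => f (S g⁻¹ x)

namespace IsKoopman

variable {X : Type*} [MeasurableSpace X] {G : Type*} [Group G] {μ : Measure X}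
  {S : G → X → X} {T : G → Lp ℝ 2 μ →L[ℝ] Lp ℝ 2 μ}

theorem apply_eq_compMeasurePreserving (hK : IsKoopman μ S T) (g : G) (f : Lp ℝ 2 μ) :
    T g f = Lp.compMeasurePreserving (S g⁻¹) (hK.measurePreserving g⁻¹) f :=
  Lp.ext <| (hK.coeFn_ae_eq g f).trans (Lp.coeFn_compMeasurePreserving f _).symm

theorem one_apply (hK : IsKoopman μ S T) (f : Lp ℝ 2 μ) : T 1 f = f := by
  rw [hK.apply_eq_compMeasurePreserving]
  simp only [inv_one, hK.map_one]
  exact Lp.compMeasurePreserving_id_apply f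

theorem apply_apply (hK : IsKoopman μ S T) (g g' : G) (f : Lp ℝ 2 μ) :
    T g (T g' f) = T (g * g') f := by
  simp only [hK.apply_eq_compMeasurePreserving, ← Lp.compMeasurePreserving_comp_apply,
    mul_inv_rev, hK.map_mul]

theorem inner_apply_apply (hK : IsKoopman μ S T) (g : G) (f h : Lp ℝ 2 μ) :
    inner ℝ (T g f) (T g h) = inner ℝ f h := by
  simp only [hK.apply_eq_compMeasurePreserving]
  exact (Lp.compMeasurePreservingₗᵢ ℝ _ (hK.measurePreserving g⁻¹)).inner_map_map f h

theorem inner_apply_left (hK : IsKoopman μ S T) (g : G) (f h : Lp ℝ 2 μ) :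
    inner ℝ (T g f) h = inner ℝ f (T g⁻¹ h) := by
  conv_lhs => rw [← hK.one_apply h, ← mul_inv_cancel g, ← hK.apply_apply]
  exact hK.inner_apply_apply g f (T g⁻¹ h)

end IsKoopman

def PopAdjoint {Ξ : Type*} [Fintype Ξ] {X : Type*} [MeasurableSpace X] {G : Type*} [Group G]
    (μ : Measure X) (p : Ξ → ℝ) (p' : Ξ → Ξ → ℝ) (T : G → Lp ℝ 2 μ →L[ℝ] Lp ℝ 2 μ)
    (γ : Ξ → G) (ψ : Ξ → Lp ℝ 2 μ) : Ξ → Lp ℝ 2 μ :=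
  fun j => ∑ k, (p k * p' k j / p j) • T (γ k) (ψ k)

section Operators

variable {Ξ : Type*} {X : Type*} [MeasurableSpace X] {G : Type*} [Group G]
  {μ : Measure X} {S : G → X → X} {T : G → Lp ℝ 2 μ →L[ℝ] Lp ℝ 2 μ}
  {p : Ξ → ℝ} {p' : Ξ → Ξ → ℝ} {ι : Ξ → Ξ} {γ ω : Ξ → G}

theorem Uop_Uop (hK : IsKoopman μ S T) (hι : Function.Involutive ι)
    (hω : ∀ k, ω (ι k) = (ω k)⁻¹) (φ : Ξ → Lp ℝ 2 μ) :
    Uop μ T ι ω (Uop μ T ι ω φ) = φ := by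
  funext j
  simp only [Uop, hι j, hω, inv_inv, hK.apply_apply, inv_mul_cancel, hK.one_apply]

variable [Fintype Ξ]

theorem wip_Uop_left (hK : IsKoopman μ S T) (hι : Function.Involutive ι)
    (hpι : ∀ j, p (ι j) = p j) (hω : ∀ k, ω (ι k) = (ω k)⁻¹) (φ ψ : Ξ → Lp ℝ 2 μ) :
    wip μ p (Uop μ T ι ω φ) ψ = wip μ p φ (Uop μ T ι ω ψ) := by
  unfold wip
  rw [← Equiv.sum_comp (hι.toPerm ι)]
  refine Finset.sum_congr rfl fun j _ => ?_
  simp only [Uop, Function.Involutive.coe_toPerm, hpι, hι j, hω, inv_inv, hK.inner_apply_left]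

theorem wip_Pop_left (hK : IsKoopman μ S T) (hp : ∀ j, p j ≠ 0) (φ ψ : Ξ → Lp ℝ 2 μ) :
    wip μ p (Pop μ p' T γ φ) ψ = wip μ p φ (PopAdjoint μ p p' T γ ψ) := by
  unfold wip Pop PopAdjoint
  simp only [sum_inner, inner_sum, real_inner_smul_left, real_inner_smul_right,
    hK.inner_apply_left, inv_inv, Finset.mul_sum]
  rw [Finset.sum_comm]
  refine Finset.sum_congr rfl fun j _ => Finset.sum_congr rfl fun k _ => ?_
  field_simp [hp j]

theorem Uop_Pop_Uop (hK : IsKoopman μ S T) (hι : Function.Involutive ι)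
    (hω : ∀ k, ω (ι k) = (ω k)⁻¹) (ψ : Ξ → Lp ℝ 2 μ) :
    Uop μ T ι ω (Pop μ p' T γ (Uop μ T ι ω ψ)) =
      fun j => ∑ k, p' (ι j) (ι k) • T ((ω j)⁻¹ * (γ (ι j))⁻¹ * ω k) (ψ k) := by
  funext j
  simp only [Uop, Pop, map_sum, map_smul]
  rw [← Equiv.sum_comp (hι.toPerm ι)]
  refine Finset.sum_congr rfl fun k _ => ?_
  simp only [Function.Involutive.coe_toPerm, hι k, hω, inv_inv, hK.apply_apply, mul_assoc]

/-- `hγ` constrains `γ k` only where `p_{kj} > 0`; the remaining terms vanish on both sides. -/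
theorem PopAdjoint_eq_Uop_Pop_Uop (hK : IsKoopman μ S T) (hι : Function.Involutive ι)
    (hω : ∀ k, ω (ι k) = (ω k)⁻¹) (hp'nn : ∀ j k, 0 ≤ p' j k)
    (hp'ι : ∀ j k, p' (ι j) (ι k) = p k * p' k j / p j)
    (hγ : ∀ j k, 0 < p' k j → γ k = (ω j)⁻¹ * (γ (ι j))⁻¹ * ω k) (ψ : Ξ → Lp ℝ 2 μ) :
    PopAdjoint μ p p' T γ ψ = Uop μ T ι ω (Pop μ p' T γ (Uop μ T ι ω ψ)) := by
  rw [Uop_Pop_Uop hK hι hω]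
  funext j
  refine Finset.sum_congr rfl fun k _ => ?_
  rw [hp'ι]
  rcases (hp'nn k j).eq_or_lt with hzero | hpos
  · simp [← hzero]
  · rw [← hγ j k hpos]

end Operators

theorem statement9_general
    {Ξ : Type*} [Fintype Ξ] {X : Type*} [MeasurableSpace X] {G : Type*} [Group G]
    (μ : Measure X)
    -- the probability vector and the transition probabilities
    (p : Ξ → ℝ) (hp : ∀ j, 0 < p j)
    (p' : Ξ → Ξ → ℝ) (hp'nn : ∀ j k, 0 ≤ p' j k)
    -- the measure-preserving action of G on (X,μ) by invertible transformations
    (S : G → X → X) (hS : ∀ g, MeasurePreserving (S g) μ μ)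
    (hS1 : S 1 = id) (hSm : ∀ g g', S (g * g') = S g ∘ S g')
    -- the Koopman operators T_g f = f ∘ S g⁻¹ on L²(X,μ)
    (T : G → Lp ℝ 2 μ →L[ℝ] Lp ℝ 2 μ)
    (hT : ∀ g (f : Lp ℝ 2 μ), (T g f : X → ℝ) =ᵐ[μ] fun x => f (S g⁻¹ x))
    -- the involution and the maps γ, ω
    (ι : Ξ → Ξ) (hι : ∀ j, ι (ι j) = j)
    (γ ω : Ξ → G)
    (hpι : ∀ j, p (ι j) = p j)
    (hp'ι : ∀ j k, p' (ι j) (ι k) = p k * p' k j / p j)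
    (hω : ∀ k, ω (ι k) = (ω k)⁻¹)
    (hγ : ∀ j k, 0 < p' k j → γ k = (ω j)⁻¹ * (γ (ι j))⁻¹ * ω k) :
    (∀ φ : Ξ → Lp ℝ 2 μ, Uop μ T ι ω (Uop μ T ι ω φ) = φ) ∧
    (∀ φ ψ : Ξ → Lp ℝ 2 μ, wip μ p (Uop μ T ι ω φ) ψ = wip μ p φ (Uop μ T ι ω ψ)) ∧
    (∀ φ ψ : Ξ → Lp ℝ 2 μ,
      wip μ p (Pop μ p' T γ φ) ψ =
        wip μ p φ (Uop μ T ι ω (Pop μ p' T γ (Uop μ T ι ω ψ)))) := by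
  have hK : IsKoopman μ S T := ⟨hS, hS1, hSm, hT⟩
  refine ⟨Uop_Uop hK hι hω, wip_Uop_left hK hι hpι hω, fun φ ψ => ?_⟩
  rw [wip_Pop_left hK (fun j => (hp j).ne'),
    PopAdjoint_eq_Uop_Pop_Uop hK hι hω hp'nn hp'ι hγ]

/-- For a reversible Parry-type Markov measure and maps `γ, ω` compatible with
the time-reversing involution `ι`, the operators `P` and `U` on `L²(Ξ × X, p × μ)` satisfy
`U = U⁻¹ = U*` and `P* = U P U`. -/
theorem statement9
    {Ξ : Type*} [Fintype Ξ] {X : Type*} [MeasurableSpace X] {G : Type*} [Group G]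
    (μ : Measure X) [IsProbabilityMeasure μ]
    -- the probability vector and the transition probabilities
    (p : Ξ → ℝ) (hp : ∀ j, 0 < p j) (hpsum : ∑ j, p j = 1)
    (p' : Ξ → Ξ → ℝ) (hp'nn : ∀ j k, 0 ≤ p' j k) (hrow : ∀ j, ∑ k, p' j k = 1)
    -- the measure-preserving action of G on (X,μ) by invertible transformations
    (S : G → X → X) (hS : ∀ g, MeasurePreserving (S g) μ μ)
    (hS1 : S 1 = id) (hSm : ∀ g g', S (g * g') = S g ∘ S g')
    -- the Koopman operators T_g f = f ∘ S g⁻¹ on L²(X,μ)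
    (T : G → Lp ℝ 2 μ →L[ℝ] Lp ℝ 2 μ)
    (hT : ∀ g (f : Lp ℝ 2 μ), (T g f : X → ℝ) =ᵐ[μ] fun x => f (S g⁻¹ x))
    -- the involution and the maps γ, ω
    (ι : Ξ → Ξ) (hι : ∀ j, ι (ι j) = j)
    (γ ω : Ξ → G)
    (hpι : ∀ j, p (ι j) = p j)
    (hp'ι : ∀ j k, p' (ι j) (ι k) = p k * p' k j / p j)
    (hω : ∀ k, ω (ι k) = (ω k)⁻¹)
    (hγ : ∀ j k, 0 < p' k j → γ k = (ω j)⁻¹ * (γ (ι j))⁻¹ * ω k) :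
    (∀ φ : Ξ → Lp ℝ 2 μ, Uop μ T ι ω (Uop μ T ι ω φ) = φ) ∧
    (∀ φ ψ : Ξ → Lp ℝ 2 μ, wip μ p (Uop μ T ι ω φ) ψ = wip μ p φ (Uop μ T ι ω ψ)) ∧
    (∀ φ ψ : Ξ → Lp ℝ 2 μ,
      wip μ p (Pop μ p' T γ φ) ψ =
        wip μ p φ (Uop μ T ι ω (Pop μ p' T γ (Uop μ T ι ω ψ)))) :=
  statement9_general μ p hp p' hp'nn S hS hS1 hSm T hT ι hι γ ω hpι hp'ι hω hγ
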